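/- For every ρ ∈ ℂ with ρ ≠ 0, setting λ = ρ², one has for all x ∈ [a, min(2a,π)]: Y(x,λ) = sin(ρx)/ρ + Y₁(x,λ), where Y₁(x,λ) = −(cos ρ(x−a))/(2ρ²) ∫_a^x q(t) dt + (1/(2ρ²)) ∫_a^x q(t) cos ρ(x−2t+a) dt. -/

import Mathlib

/-! Variation of constants: if `y'' + ρ² y = f`, then
`t ↦ sin (ρ (x - t)) / ρ * y' t + cos (ρ (x - t)) * y t` has derivative `sin (ρ (x - t)) * f t / ρ`,
so a solution of the delay equation satisfies
`Y x = sin (ρ x) / ρ + ρ⁻¹ ∫₀ˣ sin (ρ (x - t)) q(t) Y(t - a) dt`. Since `q` vanishes on `[0, a]`,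
this gives `Y x = sin (ρ x) / ρ` there; for `x ∈ [a, 2a]` the delayed argument `t - a` lies in
`[0, a]`, the integrand becomes explicit, and `2 sin A sin B = cos (A - B) - cos (A + B)` turns it
into `Y₁`. -/
open Real Set MeasureTheory intervalIntegral Filter Asymptotics Topology

noncomputable section

/-- `y` is a (strong) solution of the delay equation `-y''(x) + q(x) y(x - a) = λ y(x)`
on `(0, π)` (equivalently `y'' = q(x) y(x - a) - λ y`), differentiable on `[0, π]` with
continuous derivative there, and with initial conditions `y(0) = 0`, `y'(0) = 1`. -/
def IsSolution (a : ℝ) (q : ℝ → ℂ) (lam : ℂ) (y : ℝ → ℂ) : Prop :=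
  (∀ x ∈ Icc (0:ℝ) π, HasDerivAt y (deriv y x) x) ∧
  (∀ x ∈ Ioo (0:ℝ) π, HasDerivAt (deriv y) (q x * y (x - a) - lam * y x) x) ∧
  ContinuousOn (deriv y) (Icc 0 π) ∧
  y 0 = 0 ∧ deriv y 0 = 1

/-- The term `Y₁(x, λ)`, where `λ = ρ²`. -/
def Y1 (a : ℝ) (q : ℝ → ℂ) (ρ : ℂ) (x : ℝ) : ℂ :=
  -(Complex.cos (ρ * (x - a)) / (2 * ρ ^ 2)) * (∫ t in a..x, q t)
    + (1 / (2 * ρ ^ 2)) * ∫ t in a..x, q t * Complex.cos (ρ * (x - 2 * t + a))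

/-- The term `Y₂(x, λ)`, where `λ = ρ²`. -/
def Y2 (a : ℝ) (q : ℝ → ℂ) (ρ : ℂ) (x : ℝ) : ℂ :=
  ∫ t in (2 * a)..x, (Complex.sin (ρ * (x - t)) / ρ) * q t * Y1 a q ρ (t - a)

theorem hasDerivAt_sin_mul_sub (ρ : ℂ) (x t : ℝ) :
    HasDerivAt (fun u : ℝ => Complex.sin (ρ * (x - u))) (-ρ * Complex.cos (ρ * (x - t))) t := by
  have h := (((hasDerivAt_id (t : ℂ)).const_sub (x : ℂ)).const_mul ρ).csin.comp_ofReal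
  simp only [id] at h
  convert h using 1
  ring

theorem hasDerivAt_cos_mul_sub (ρ : ℂ) (x t : ℝ) :
    HasDerivAt (fun u : ℝ => Complex.cos (ρ * (x - u))) (ρ * Complex.sin (ρ * (x - t))) t := by
  have h := (((hasDerivAt_id (t : ℂ)).const_sub (x : ℂ)).const_mul ρ).ccos.comp_ofReal
  simp only [id] at h
  convert h using 1
  ring

theorem eq_variation_of_constants {y y' f : ℝ → ℂ} {ρ : ℂ} {x₀ x : ℝ}
    (hρ : ρ ≠ 0) (hx : x₀ ≤ x)
    (hy : ∀ t ∈ Icc x₀ x, HasDerivAt y (y' t) t)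
    (hy'c : ContinuousOn y' (Icc x₀ x))
    (hy' : ∀ t ∈ Ioo x₀ x, HasDerivAt y' (f t - ρ ^ 2 * y t) t)
    (hf : IntervalIntegrable f volume x₀ x) :
    y x = Complex.cos (ρ * (x - x₀)) * y x₀ + Complex.sin (ρ * (x - x₀)) / ρ * y' x₀
      + (∫ t in x₀..x, Complex.sin (ρ * (x - t)) * f t) / ρ := by
  set F : ℝ → ℂ := fun t => Complex.sin (ρ * (x - t)) / ρ * y' t + Complex.cos (ρ * (x - t)) * y t
  have hyc : ContinuousOn y (Icc x₀ x) := fun t ht => (hy t ht).continuousAt.continuousWithinAt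
  have hFc : ContinuousOn F (Icc x₀ x) := by
    refine ((Continuous.continuousOn ?_).mul hy'c).add ((Continuous.continuousOn ?_).mul hyc) <;>
      fun_prop
  have hF' : ∀ t ∈ Ioo x₀ x,
      HasDerivAt F (Complex.sin (ρ * (x - t)) * f t / ρ) t := fun t ht => by
    refine ((((hasDerivAt_sin_mul_sub ρ x t).div_const ρ).mul (hy' t ht)).add
      ((hasDerivAt_cos_mul_sub ρ x t).mul (hy t (Ioo_subset_Icc_self ht)))).congr_deriv ?_
    field_simp
    ring
  have hint : IntervalIntegrable (fun t => Complex.sin (ρ * (x - t)) * f t / ρ) volume x₀ x :=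
    (hf.continuousOn_mul (Continuous.continuousOn (by fun_prop))).div_const ρ
  have hftc := intervalIntegral.integral_eq_sub_of_hasDerivAt_of_le hx hFc hF' hint
  simp only [F, sub_self, mul_zero, Complex.sin_zero, Complex.cos_zero, zero_div, zero_mul,
    one_mul, zero_add, intervalIntegral.integral_div] at hftc
  rw [hftc]
  ring

theorem integrableOn_mul_comp_sub {q y : ℝ → ℂ} {a b : ℝ} (ha : 0 ≤ a)
    (hq : IntegrableOn q (Ioc a b)) (hq0 : ∀ x ∈ Icc 0 a, q x = 0)
    (hy : ContinuousOn y (Icc 0 b)) :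
    IntegrableOn (fun t => q t * y (t - a)) (Icc 0 b) := by
  have h₁ : IntegrableOn (fun t => q t * y (t - a)) (Icc 0 a) :=
    integrableOn_zero.congr_fun (fun t ht => by simp [hq0 t ht]) measurableSet_Icc
  have hmaps : MapsTo (fun t => t - a) (Icc a b) (Icc 0 b) := fun t ht =>
    ⟨by linarith [ht.1], by linarith [ht.2]⟩
  have h₂ : IntegrableOn (fun t => q t * y (t - a)) (Icc a b) :=
    ((integrableOn_Icc_iff_integrableOn_Ioc (f := q)).2 hq).mul_continuousOn
      (hy.comp (by fun_prop) hmaps) isCompact_Icc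
  exact (h₁.union h₂).mono_set Icc_subset_Icc_union_Icc

theorem integral_sin_mul_mul_sin_div_eq_Y1 {q : ℝ → ℂ} {ρ : ℂ} {a x : ℝ} (hρ : ρ ≠ 0)
    (hq : IntervalIntegrable q volume a x) :
    (∫ t in a..x, Complex.sin (ρ * (x - t)) * (q t * (Complex.sin (ρ * (t - a)) / ρ))) / ρ
      = Y1 a q ρ x := by
  have hprod : ∀ t : ℝ, Complex.sin (ρ * (x - t)) * (q t * (Complex.sin (ρ * (t - a)) / ρ))
      = (q t * Complex.cos (ρ * (x - 2 * t + a)) - Complex.cos (ρ * (x - a)) * q t) / (2 * ρ) := by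
    intro t
    have e₁ : ρ * (x - 2 * t + a) = ρ * (x - t) - ρ * (t - a) := by ring
    have e₂ : ρ * (x - a) = ρ * (x - t) + ρ * (t - a) := by ring
    rw [e₁, e₂, Complex.cos_sub, Complex.cos_add]
    field_simp
    ring
  have hcos : IntervalIntegrable (fun t => q t * Complex.cos (ρ * (x - 2 * t + a))) volume a x :=
    hq.mul_continuousOn (Continuous.continuousOn (by fun_prop))
  simp only [hprod, intervalIntegral.integral_div,
    intervalIntegral.integral_sub hcos (hq.const_mul _), intervalIntegral.integral_const_mul, Y1]
  field_simp
  ring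

theorem integral_mul_mul_comp_sub_eq_zero {q y g : ℝ → ℂ} {a b : ℝ}
    (hq0 : ∀ x ∈ Icc 0 a, q x = 0) (hb : b ∈ Icc 0 a) :
    ∫ t in (0 : ℝ)..b, g t * (q t * y (t - a)) = 0 :=
  intervalIntegral.integral_zero_ae <| .of_forall fun t ht => by
    rw [uIoc_of_le hb.1] at ht
    simp [hq0 t ⟨ht.1.le, ht.2.trans hb.2⟩]

namespace IsSolution

variable {a : ℝ} {q : ℝ → ℂ} {ρ : ℂ} {y : ℝ → ℂ}

theorem continuousOn {lam : ℂ} (hy : IsSolution a q lam y) : ContinuousOn y (Icc 0 π) :=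
  fun x hx => (hy.1 x hx).continuousAt.continuousWithinAt

theorem eq_sin_div_add_integral (hy : IsSolution a q (ρ ^ 2) y) (hρ : ρ ≠ 0)
    (hf : IntegrableOn (fun t => q t * y (t - a)) (Icc 0 π)) {x : ℝ} (hx : x ∈ Icc 0 π) :
    y x = Complex.sin (ρ * x) / ρ
      + (∫ t in (0 : ℝ)..x, Complex.sin (ρ * (x - t)) * (q t * y (t - a))) / ρ := by
  obtain ⟨hd, hdd, hdc, h₀, h₀'⟩ := hy
  have hsub : Icc 0 x ⊆ Icc 0 π := Icc_subset_Icc_right hx.2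
  have h := eq_variation_of_constants (f := fun t => q t * y (t - a)) hρ hx.1
    (fun t ht => hd t (hsub ht)) (hdc.mono hsub)
    (fun t ht => hdd t (Ioo_subset_Ioo_right hx.2 ht))
    ((intervalIntegrable_iff_integrableOn_Icc_of_le hx.1).2 (hf.mono_set hsub))
  simpa [h₀, h₀'] using h

theorem eq_sin_div_of_mem_Icc (hy : IsSolution a q (ρ ^ 2) y) (hρ : ρ ≠ 0)
    (hf : IntegrableOn (fun t => q t * y (t - a)) (Icc 0 π)) (haπ : a ≤ π)
    (hq0 : ∀ x ∈ Icc 0 a, q x = 0) {x : ℝ} (hx : x ∈ Icc 0 a) :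
    y x = Complex.sin (ρ * x) / ρ := by
  rw [hy.eq_sin_div_add_integral hρ hf ⟨hx.1, hx.2.trans haπ⟩,
    integral_mul_mul_comp_sub_eq_zero hq0 hx, zero_div, add_zero]

theorem eq_sin_div_add_integral_of_le (hy : IsSolution a q (ρ ^ 2) y) (hρ : ρ ≠ 0)
    (hf : IntegrableOn (fun t => q t * y (t - a)) (Icc 0 π)) (ha : 0 ≤ a)
    (hq0 : ∀ x ∈ Icc 0 a, q x = 0) {x : ℝ} (hax : a ≤ x) (hxπ : x ≤ π) :
    y x = Complex.sin (ρ * x) / ρ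
      + (∫ t in a..x, Complex.sin (ρ * (x - t)) * (q t * y (t - a))) / ρ := by
  have hint : ∀ b c, b ∈ Icc 0 π → c ∈ Icc 0 π →
      IntervalIntegrable (fun t => Complex.sin (ρ * (x - t)) * (q t * y (t - a))) volume b c :=
    fun b c hb hc => ((hf.continuousOn_mul (Continuous.continuousOn (by fun_prop))
      isCompact_Icc).mono_set (uIcc_subset_Icc hb hc)).intervalIntegrable
  have haπ : a ∈ Icc 0 π := ⟨ha, hax.trans hxπ⟩
  have hx : x ∈ Icc 0 π := ⟨ha.trans hax, hxπ⟩
  rw [hy.eq_sin_div_add_integral hρ hf hx, ← intervalIntegral.integral_add_adjacent_intervals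
    (hint 0 a (left_mem_Icc.2 pi_nonneg) haπ) (hint a x haπ hx),
    integral_mul_mul_comp_sub_eq_zero hq0 (right_mem_Icc.2 ha), zero_add]

end IsSolution

theorem solution_on_second_interval_general
    (a : ℝ) (ha : a ∈ Ioo 0 π)
    (q : ℝ → ℂ) (hq_int : IntegrableOn q (Ioc a π))
    (hq0 : ∀ x ∈ Icc (0:ℝ) a, q x = 0)
    (ρ : ℂ) (hρ : ρ ≠ 0) (Y : ℝ → ℂ) (hY : IsSolution a q (ρ ^ 2) Y) :
    ∀ x ∈ Icc a (min (2 * a) π), Y x = Complex.sin (ρ * x) / ρ + Y1 a q ρ x := by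
  rintro x ⟨hax, hx⟩
  obtain ⟨hx2a, hxπ⟩ := le_min_iff.1 hx
  have hf := integrableOn_mul_comp_sub ha.1.le hq_int hq0 hY.continuousOn
  have hq : IntervalIntegrable q volume a x :=
    (intervalIntegrable_iff_integrableOn_Ioc_of_le hax).2
      (hq_int.mono_set (Ioc_subset_Ioc_right hxπ))
  have hdelay : EqOn (fun t : ℝ => Complex.sin (ρ * (x - t)) * (q t * Y (t - a)))
      (fun t : ℝ => Complex.sin (ρ * (x - t)) * (q t * (Complex.sin (ρ * (t - a)) / ρ)))
      (uIcc a x) := by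
    intro t ht
    rw [uIcc_of_le hax] at ht
    simp only [hY.eq_sin_div_of_mem_Icc hρ hf ha.2.le hq0
      ⟨sub_nonneg.2 ht.1, by linarith [ht.2]⟩, Complex.ofReal_sub]
  rw [hY.eq_sin_div_add_integral_of_le hρ hf ha.1.le hq0 hax hxπ,
    intervalIntegral.integral_congr hdelay, integral_sin_mul_mul_sin_div_eq_Y1 hρ hq]

/-- For `ρ ≠ 0`, `λ = ρ²`, one has `Y(x, λ) = sin(ρx)/ρ + Y₁(x, λ)` on `[a, min(2a, π)]`. -/
theorem solution_on_second_interval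
    (a : ℝ) (ha : a ∈ Ioo 0 π)
    (q : ℝ → ℂ) (hq_int : IntegrableOn q (Ioc a π))
    (hq0 : ∀ x ∈ Icc (0:ℝ) a, q x = 0)
    (ρ : ℂ) (hρ : ρ ≠ 0) (Y : ℝ → ℂ) (hY : IsSolution a q (ρ ^ 2) Y)
    (hYuniq : ∀ y : ℝ → ℂ, IsSolution a q (ρ ^ 2) y → EqOn y Y (Icc 0 π)) :
    ∀ x ∈ Icc a (min (2 * a) π), Y x = Complex.sin (ρ * x) / ρ + Y1 a q ρ x :=
  solution_on_second_interval_general a ha q hq_int hq0 ρ hρ Y hY
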